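/- arXiv:1203.1370 — 3 statements merged into one kernel-verified Lean document; each statement's English description precedes it below -/
import Mathlib

section
/- (Han–Larson dilation theorem.) Let k > n and let (f_i)_{i=1}^k be a Parseval frame for ℝⁿ (with its standard inner product). Then there exists a Parseval frame (g_i)_{i=1}^k for ℝ^{k-n} such that the sequence (f_i ⊕ g_i)_{i=1}^k is an orthonormal basis for ℝⁿ ⊕ ℝ^{k-n} ≅ ℝᵏ. -/
/-!
The analysis operator `x ↦ (⟪f i, x⟫)ᵢ` of a Parseval frame `f` of `E` is an isometry
`E → 𝕜^ι`. When `dim E + dim F = |ι|`, it extends, by an isometry of `F` onto the orthogonal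
complement of its range, to an isometric isomorphism `Φ : E ⊕ F ≅ 𝕜^ι`. The orthonormal basis
`bᵢ = Φ⁻¹ eᵢ` has first components `⟪bᵢ, (x, 0)⟫ = ⟪eᵢ, Φ (x, 0)⟫ = ⟪f i, x⟫`, i.e. `f i`; its
second components form a Parseval frame of `F`, as the second components of any orthonormal basis
of `E ⊕ F` do.
-/

section

open Module
open scoped InnerProductSpace

variable {𝕜 ι E F G : Type*} [RCLike 𝕜]
  [NormedAddCommGroup E] [InnerProductSpace 𝕜 E]
  [NormedAddCommGroup F] [InnerProductSpace 𝕜 F]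
  [NormedAddCommGroup G] [InnerProductSpace 𝕜 G]

variable (𝕜) in
noncomputable def analysisOperator (f : ι → E) : E →ₗ[𝕜] EuclideanSpace 𝕜 ι :=
  (WithLp.linearEquiv 2 𝕜 (ι → 𝕜)).symm.toLinearMap ∘ₗ LinearMap.pi fun i ↦ innerₛₗ 𝕜 (f i)

@[simp]
theorem analysisOperator_apply (f : ι → E) (x : E) (i : ι) :
    analysisOperator 𝕜 f x i = ⟪f i, x⟫_𝕜 :=
  rfl

variable [Fintype ι]

variable (𝕜) in
def IsParsevalFrame (f : ι → E) : Prop :=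
  ∀ x, ∑ i, ⟪f i, x⟫_𝕜 • f i = x

theorem IsParsevalFrame.inner_analysisOperator {f : ι → E} (hf : IsParsevalFrame 𝕜 f)
    (x y : E) : ⟪analysisOperator 𝕜 f x, analysisOperator 𝕜 f y⟫_𝕜 = ⟪x, y⟫_𝕜 := by
  conv_rhs => rw [← hf y]
  simp [PiLp.inner_apply, inner_sum, inner_smul_right, mul_comm]

theorem OrthonormalBasis.isParsevalFrame_snd (b : OrthonormalBasis ι 𝕜 (WithLp 2 (E × F))) :
    IsParsevalFrame 𝕜 fun i ↦ (b i).snd := fun y ↦ by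
  simpa using congrArg (WithLp.sndₗ 2 𝕜 E F) (b.sum_repr' (WithLp.toLp 2 (0, y)))

theorem LinearIsometry.exists_prod_linearIsometryEquiv [FiniteDimensional 𝕜 F]
    [FiniteDimensional 𝕜 G] (T : E →ₗᵢ[𝕜] G)
    (h : finrank 𝕜 E + finrank 𝕜 F = finrank 𝕜 G) :
    ∃ Φ : WithLp 2 (E × F) ≃ₗᵢ[𝕜] G, ∀ x, Φ (WithLp.toLp 2 (x, 0)) = T x := by
  set K := LinearMap.range T.toLinearMap
  let eK : E ≃ₗᵢ[𝕜] K :=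
    { LinearEquiv.ofInjective T.toLinearMap T.injective with norm_map' := T.norm_map }
  have heK : ∀ x, (eK x : G) = T x := fun _ ↦ rfl
  have hK : finrank 𝕜 F = finrank 𝕜 Kᗮ := by
    have := K.finrank_add_finrank_orthogonal
    rw [LinearMap.finrank_range_of_inj T.injective] at this
    omega
  let eF : F ≃ₗᵢ[𝕜] Kᗮ := (stdOrthonormalBasis 𝕜 F).repr.trans
    ((stdOrthonormalBasis 𝕜 Kᗮ).reindex (finCongr hK.symm)).repr.symm
  exact ⟨(eK.withLpProdCongr 2 eF).trans K.orthogonalDecomposition.symm, fun x ↦ by simp [heK]⟩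

theorem IsParsevalFrame.exists_dilation [FiniteDimensional 𝕜 F] {f : ι → E}
    (hf : IsParsevalFrame 𝕜 f) (h : finrank 𝕜 E + finrank 𝕜 F = Fintype.card ι) :
    ∃ g : ι → F, IsParsevalFrame 𝕜 g ∧
      ∃ b : OrthonormalBasis ι 𝕜 (WithLp 2 (E × F)), ∀ i, b i = WithLp.toLp 2 (f i, g i) := by
  classical
  obtain ⟨Φ, hΦ⟩ := ((analysisOperator 𝕜 f).isometryOfInner hf.inner_analysisOperator)
    |>.exists_prod_linearIsometryEquiv (F := F) (by rwa [finrank_euclideanSpace])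
  let b := (EuclideanSpace.basisFun ι 𝕜).map Φ.symm
  have hb : ∀ i, (b i).fst = f i := fun i ↦ ext_inner_right 𝕜 fun x ↦
    calc ⟪(b i).fst, x⟫_𝕜 = ⟪b i, WithLp.toLp 2 (x, 0)⟫_𝕜 := by simp
      _ = ⟪EuclideanSpace.single i 1, Φ (WithLp.toLp 2 (x, 0))⟫_𝕜 := by
        simp [b, ← Φ.inner_map_map]
      _ = ⟪f i, x⟫_𝕜 := by simp [hΦ, EuclideanSpace.inner_single_left]
  exact ⟨_, b.isParsevalFrame_snd, b, fun i ↦ by rw [← hb i]; rfl⟩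

end

open scoped RealInnerProductSpace

/-- Han–Larson dilation theorem: if `k > n` and `(f i)` is a Parseval
frame for `ℝⁿ`, then there is a Parseval frame `(g i)` for `ℝ^(k-n)` such that
`(f i ⊕ g i)` is an orthonormal basis of `ℝⁿ ⊕ ℝ^(k-n)`. -/
theorem han_larson_dilation {n k : ℕ} (hkn : k > n)
    (f : Fin k → EuclideanSpace ℝ (Fin n))
    (hf : ∀ x : EuclideanSpace ℝ (Fin n), ∑ i, ⟪f i, x⟫ • f i = x) :
    ∃ g : Fin k → EuclideanSpace ℝ (Fin (k - n)),
      (∀ x : EuclideanSpace ℝ (Fin (k - n)), ∑ i, ⟪g i, x⟫ • g i = x) ∧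
      ∃ b : OrthonormalBasis (Fin k) ℝ
          (WithLp 2 (EuclideanSpace ℝ (Fin n) × EuclideanSpace ℝ (Fin (k - n)))),
        ∀ i, b i = (WithLp.equiv 2
          (EuclideanSpace ℝ (Fin n) × EuclideanSpace ℝ (Fin (k - n)))).symm (f i, g i) :=
  IsParsevalFrame.exists_dilation (F := EuclideanSpace ℝ (Fin (k - n))) hf
    (by rw [finrank_euclideanSpace_fin, finrank_euclideanSpace_fin, Fintype.card_fin]; omega)
end

section
/- Let φ : (ℝⁿ)ᵏ → L(ℝⁿ, ℝⁿ) be the frame operator map F ↦ S_F, and let F = (f_i)_{i=1}^k be a Parseval frame for ℝⁿ. Then the Fréchet derivative of φ at F is surjective onto the subspace of self-adjoint operators on ℝⁿ; explicitly, for every self-adjoint operator T on ℝⁿ there is a direction H = (h_i)_{i=1}^k ∈ (ℝⁿ)ᵏ (for instance h_i = (1/2) T f_i) with Dφ(F)(H) = T. -/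
/-!
Differentiating `F ↦ ∑ ⟪·, F i⟫ • F i` term by term (product rule for a bounded bilinear map)
gives `H ↦ ∑ (⟪·, H i⟫ • F i + ⟪·, F i⟫ • H i)`. In a direction `H i = A (F i)` with `A`
symmetric this is `S_F ∘ A + A ∘ S_F`; at a Parseval frame `S_F = 1`, so `A = T / 2` gives `T`.
-/

open scoped RealInnerProductSpace

section FrameOperator

variable {ι E : Type*} [Fintype ι] [NormedAddCommGroup E] [InnerProductSpace ℝ E]

noncomputable def frameOperator (F : ι → E) : E →L[ℝ] E :=
  ∑ i, (innerSL ℝ (F i)).smulRight (F i)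

theorem frameOperator_apply (F : ι → E) (x : E) :
    frameOperator F x = ∑ i, ⟪x, F i⟫ • F i := by
  simp [frameOperator, real_inner_comm]

theorem fderiv_frameOperator_apply (F H : ι → E) :
    fderiv ℝ frameOperator F H =
      ∑ i, ((innerSL ℝ (H i)).smulRight (F i) + (innerSL ℝ (F i)).smulRight (H i)) := by
  let B : E →L[ℝ] E →L[ℝ] E →L[ℝ] E := (ContinuousLinearMap.smulRightL ℝ E E).comp (innerSL ℝ)
  have hterm : ∀ i, HasFDerivAt (fun G : ι → E => B (G i) (G i))
      (B.precompR _ (F i) (ContinuousLinearMap.proj i) +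
        B.precompL _ (ContinuousLinearMap.proj i) (F i)) F := fun i =>
    B.hasFDerivAt_of_bilinear (hasFDerivAt_apply i F) (hasFDerivAt_apply i F)
  have hF : HasFDerivAt (frameOperator (ι := ι) (E := E)) _ F :=
    HasFDerivAt.fun_sum fun i _ => hterm i
  rw [hF.fderiv]
  simp [B, add_comm]

theorem fderiv_frameOperator_comp_of_isSymmetric (F : ι → E) {A : E →L[ℝ] E}
    (hA : (A : E →ₗ[ℝ] E).IsSymmetric) :
    fderiv ℝ frameOperator F (fun i => A (F i)) = frameOperator F ∘L A + A ∘L frameOperator F := by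
  ext x
  simp only [fderiv_frameOperator_apply, sum_apply, add_apply,
    ContinuousLinearMap.smulRight_apply, innerSL_apply_apply, ContinuousLinearMap.comp_apply,
    frameOperator_apply, map_sum, map_smul, Finset.sum_add_distrib]
  congr 1
  · refine Finset.sum_congr rfl fun i _ => ?_
    rw [hA.apply_clm, real_inner_comm]
  · simp [real_inner_comm]

end FrameOperator

/-- at a Parseval frame `F = (f i)` for `ℝⁿ`, the Fréchet derivative of
the frame operator map `φ` is surjective onto the self-adjoint operators: for every
self-adjoint `T` there is a direction `H` (namely `h i = ½ • T (f i)`) with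
`Dφ(F)(H) = T`. -/
theorem frameOperator_fderiv_surj_selfAdjoint {n k : ℕ}
    (f : Fin k → EuclideanSpace ℝ (Fin n))
    (hf : ∀ x : EuclideanSpace ℝ (Fin n), ∑ i, ⟪x, f i⟫ • f i = x) :
    ∀ T : EuclideanSpace ℝ (Fin n) →L[ℝ] EuclideanSpace ℝ (Fin n),
      (∀ x y : EuclideanSpace ℝ (Fin n), ⟪T x, y⟫ = ⟪x, T y⟫) →
      ∃ H : Fin k → EuclideanSpace ℝ (Fin n),
        H = (fun i => (2 : ℝ)⁻¹ • T (f i)) ∧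
        fderiv ℝ
          (fun F : Fin k → EuclideanSpace ℝ (Fin n) =>
            ∑ i, (innerSL ℝ (F i)).smulRight (F i)) f H = T := by
  intro T hT
  refine ⟨_, rfl, ?_⟩
  have hParseval : frameOperator f = 1 :=
    ContinuousLinearMap.ext fun x => (frameOperator_apply f x).trans (hf x)
  have hHalfT : (((2 : ℝ)⁻¹ • T : EuclideanSpace ℝ (Fin n) →L[ℝ] EuclideanSpace ℝ (Fin n)) :
      EuclideanSpace ℝ (Fin n) →ₗ[ℝ] EuclideanSpace ℝ (Fin n)).IsSymmetric :=
    LinearMap.IsSymmetric.smul (conj_trivial _) hT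
  calc fderiv ℝ frameOperator f (fun i => ((2 : ℝ)⁻¹ • T) (f i))
      = frameOperator f ∘L ((2 : ℝ)⁻¹ • T) + ((2 : ℝ)⁻¹ • T) ∘L frameOperator f :=
        fderiv_frameOperator_comp_of_isSymmetric f hHalfT
    _ = T := by
        rw [hParseval, ContinuousLinearMap.one_def, ContinuousLinearMap.id_comp,
          ContinuousLinearMap.comp_id, ← add_smul]
        norm_num
end

section
/- Let k ≥ n and let F ∈ (ℝⁿ)ᵏ be a Parseval frame of k vectors for ℝⁿ. Then there exist ε > 0 and a map φ from the open ball B_ε(F) in (ℝⁿ)ᵏ to (ℝ^{k-n})ᵏ such that φ is infinitely differentiable on B_ε(F), and for every G = (g_i)_{i=1}^k ∈ B_ε(F) that is a Parseval frame for ℝⁿ, the sequence (g_i ⊕ φ(G)_i)_{i=1}^k is an orthonormal basis of ℝⁿ ⊕ ℝ^{k-n}. -/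
open scoped RealInnerProductSpace

section AuxGS

/-- `gramSchmidt` over `ℝ` with index `Fin k`, with instances pinned down (direct elaboration
of `gramSchmidt ℝ f j` gets stuck on the `WellFoundedLT (Fin k)` instance). -/
noncomputable def myGS {k : ℕ} {E : Type*} [NormedAddCommGroup E] [InnerProductSpace ℝ E]
    (f : Fin k → E) (j : Fin k) : E :=
  @InnerProductSpace.gramSchmidt ℝ _ _ _ _ (Fin k) inferInstance inferInstance
    (inferInstance : WellFoundedLT (Fin k)) f j

lemma myGS_def {k : ℕ} {E : Type*} [NormedAddCommGroup E] [InnerProductSpace ℝ E]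
    (f : Fin k → E) (j : Fin k) :
    myGS f j = f j - ∑ i ∈ Finset.Iio j, (⟪myGS f i, f j⟫ / ‖myGS f i‖ ^ 2) • myGS f i := by
  rw [myGS, InnerProductSpace.gramSchmidt_def]
  congr 1
  apply Finset.sum_congr rfl
  intro i _
  rw [Submodule.starProjection_singleton]
  norm_num [myGS]

lemma myGS_orthogonal {k : ℕ} {E : Type*} [NormedAddCommGroup E] [InnerProductSpace ℝ E]
    (f : Fin k → E) {a b : Fin k} (h : a ≠ b) : ⟪myGS f a, myGS f b⟫ = 0 :=
  @InnerProductSpace.gramSchmidt_orthogonal ℝ _ _ _ _ (Fin k) inferInstance inferInstance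
    (inferInstance : WellFoundedLT (Fin k)) f a b h

/-- Gram–Schmidt fixes an orthonormal prefix. -/
lemma myGS_prefix {K : Type*} [NormedAddCommGroup K] [InnerProductSpace ℝ K] {k N : ℕ}
    (f : Fin k → K)
    (h : ∀ i j : Fin k, (i : ℕ) < N → (j : ℕ) < N → ⟪f i, f j⟫ = if i = j then 1 else 0) :
    ∀ j : Fin k, (j : ℕ) < N → myGS f j = f j := by
  suffices H : ∀ m : ℕ, ∀ j : Fin k, (j : ℕ) = m → (j : ℕ) < N → myGS f j = f j by
    intro j hj; exact H j j rfl hj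
  intro m
  induction m using Nat.strong_induction_on with
  | _ m ih =>
    intro j hjm hjN
    rw [myGS_def, sub_eq_self]
    apply Finset.sum_eq_zero
    intro i hi
    have hij : i < j := Finset.mem_Iio.mp hi
    have hiN : (i : ℕ) < N := by
      have : (i : ℕ) < (j : ℕ) := hij
      omega
    have hgs : myGS f i = f i := ih i (by have : (i:ℕ) < (j:ℕ) := hij; omega) i rfl hiN
    rw [hgs, h i j hiN hjN, if_neg hij.ne]
    simp

lemma myGS_smooth {k : ℕ} {V K : Type*} [NormedAddCommGroup V] [NormedSpace ℝ V]
    [NormedAddCommGroup K] [InnerProductSpace ℝ K]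
    (v : V → Fin k → K) (hv : ∀ j, ContDiff ℝ (⊤ : ℕ∞) (fun G => v G j)) (F : V)
    (h0 : ∀ j, myGS (v F) j ≠ 0) :
    ∃ ε > (0 : ℝ),
      (∀ j, ContDiffOn ℝ (⊤ : ℕ∞) (fun G => myGS (v G) j) (Metric.ball F ε)) ∧
      ∀ G ∈ Metric.ball F ε, ∀ j, myGS (v G) j ≠ 0 := by
  have hP : ∀ m : ℕ, ∃ ε > (0 : ℝ), ∀ j : Fin k, (j : ℕ) < m →
      ContDiffOn ℝ (⊤ : ℕ∞) (fun G => myGS (v G) j) (Metric.ball F ε) ∧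
      ∀ G ∈ Metric.ball F ε, myGS (v G) j ≠ 0 := by
    intro m
    induction m with
    | zero => exact ⟨1, one_pos, fun j hj => absurd hj (by omega)⟩
    | succ m ih =>
      obtain ⟨ε, hε, hball⟩ := ih
      by_cases hm : m < k
      · set jm : Fin k := ⟨m, hm⟩ with hjm_def
        have hsm : ContDiffOn ℝ (⊤ : ℕ∞) (fun G => myGS (v G) jm) (Metric.ball F ε) := by
          have heq : (fun G => myGS (v G) jm) = fun G => v G jm -
              ∑ i ∈ Finset.Iio jm,
                (⟪myGS (v G) i, v G jm⟫ / ‖myGS (v G) i‖ ^ 2) • myGS (v G) i :=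
            funext fun G => myGS_def (v G) jm
          rw [heq]
          apply ContDiffOn.sub ((hv jm).contDiffOn)
          apply ContDiffOn.sum
          intro i hi
          have hi' : (i : ℕ) < m := by
            have : i < jm := Finset.mem_Iio.mp hi
            exact this
          obtain ⟨hsmi, hnei⟩ := hball i hi'
          have hne : ∀ G ∈ Metric.ball F ε, ‖myGS (v G) i‖ ^ 2 ≠ 0 := fun G hG =>
            pow_ne_zero _ (norm_ne_zero_iff.mpr (hnei G hG))
          have h1 : ContDiffOn ℝ (⊤ : ℕ∞) (fun G => ⟪myGS (v G) i, v G jm⟫) (Metric.ball F ε) :=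
            ContDiffOn.inner ℝ hsmi ((hv jm).contDiffOn)
          have h2 : ContDiffOn ℝ (⊤ : ℕ∞) (fun G => ‖myGS (v G) i‖ ^ 2) (Metric.ball F ε) :=
            (ContDiffOn.norm ℝ hsmi fun G hG => hnei G hG).pow 2
          exact (h1.div h2 hne).smul hsmi
        have hcont : ContinuousAt (fun G => myGS (v G) jm) F :=
          hsm.continuousOn.continuousAt (Metric.ball_mem_nhds F hε)
        have hev := hcont.eventually_ne (h0 jm)
        rw [Metric.eventually_nhds_iff_ball] at hev
        obtain ⟨δ, hδ, hδne⟩ := hev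
        refine ⟨min ε δ, lt_min hε hδ, ?_⟩
        intro j hj
        have hsub : Metric.ball F (min ε δ) ⊆ Metric.ball F ε :=
          Metric.ball_subset_ball (min_le_left _ _)
        rcases Nat.lt_succ_iff_lt_or_eq.mp hj with h | h
        · obtain ⟨a, b⟩ := hball j h
          exact ⟨a.mono hsub, fun G hG => b G (hsub hG)⟩
        · have : j = jm := Fin.ext h
          subst this
          exact ⟨hsm.mono hsub,
            fun G hG => hδne G (Metric.ball_subset_ball (min_le_right _ _) hG)⟩
      · refine ⟨ε, hε, fun j hj => hball j ?_⟩
        have := j.isLt; omega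
  obtain ⟨ε, hε, hball⟩ := hP k
  exact ⟨ε, hε, fun j => (hball j j.isLt).1, fun G hG j => (hball j j.isLt).2 G hG⟩

lemma euclid_sum_apply {n k : ℕ} (s : Finset (Fin k)) (f : Fin k → EuclideanSpace ℝ (Fin n))
    (j : Fin n) : (∑ i ∈ s, f i) j = ∑ i ∈ s, f i j :=
  by rw [WithLp.ofLp_sum]; exact Finset.sum_apply j s _

lemma parseval_coords {n k : ℕ} (G : PiLp 2 (fun _ : Fin k => EuclideanSpace ℝ (Fin n)))
    (hG : ∀ x : EuclideanSpace ℝ (Fin n), ∑ i, ⟪G i, x⟫ • G i = x) (j j' : Fin n) :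
    ∑ i, G i j * G i j' = if j = j' then 1 else 0 := by
  have h := congrArg (fun v : EuclideanSpace ℝ (Fin n) => v j) (hG (EuclideanSpace.single j' 1))
  beta_reduce at h
  rw [euclid_sum_apply] at h
  simp only [PiLp.smul_apply, smul_eq_mul,
    EuclideanSpace.inner_single_right, EuclideanSpace.single_apply, one_mul,
    RCLike.star_def, conj_trivial] at h
  rw [← h]
  exact Finset.sum_congr rfl fun i _ => by ring

end AuxGS

set_option maxHeartbeats 2000000 in
/-- near a Parseval frame `F` of `k ≥ n` vectors for `ℝⁿ`, there is a
smooth map `φ` on a ball `B_ε(F)` (in the `k`-fold orthogonal direct sum of `ℝⁿ`) with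
values in `(ℝ^(k-n))ᵏ` such that for every Parseval frame `G ∈ B_ε(F)`, the sequence
`(G i ⊕ φ(G) i)` is an orthonormal basis of `ℝⁿ ⊕ ℝ^(k-n)`. -/
theorem local_smooth_complementary_frame {n k : ℕ} (hkn : k ≥ n)
    (F : PiLp 2 (fun _ : Fin k => EuclideanSpace ℝ (Fin n)))
    (hF : ∀ x : EuclideanSpace ℝ (Fin n), ∑ i, ⟪F i, x⟫ • F i = x) :
    ∃ ε > (0 : ℝ),
      ∃ φ : PiLp 2 (fun _ : Fin k => EuclideanSpace ℝ (Fin n)) →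
          (Fin k → EuclideanSpace ℝ (Fin (k - n))),
        ContDiffOn ℝ (⊤ : ℕ∞) φ (Metric.ball F ε) ∧
        ∀ G ∈ Metric.ball F ε,
          (∀ x : EuclideanSpace ℝ (Fin n), ∑ i, ⟪G i, x⟫ • G i = x) →
          ∃ b : OrthonormalBasis (Fin k) ℝ
              (WithLp 2 (EuclideanSpace ℝ (Fin n) × EuclideanSpace ℝ (Fin (k - n)))),
            ∀ i, b i = (WithLp.equiv 2
              (EuclideanSpace ℝ (Fin n) × EuclideanSpace ℝ (Fin (k - n)))).symm
                (G i, φ G i) := by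
  classical
  -- the "column" continuous linear maps
  have col_def : ∀ (j : Fin n), ∃ c : PiLp 2 (fun _ : Fin k => EuclideanSpace ℝ (Fin n))
      →L[ℝ] EuclideanSpace ℝ (Fin k),
      ∀ G i, c G i = G i j := by
    intro j
    set_option synthInstance.maxHeartbeats 400000 in
    refine ⟨LinearMap.toContinuousLinearMap
      { toFun := fun G => (WithLp.equiv 2 ((i : Fin k) → ℝ)).symm (fun i => G i j)
        map_add' := ?_
        map_smul' := ?_ }, fun G i => rfl⟩
    · intro G G'; ext i
      simp [WithLp.equiv_symm_apply, PiLp.add_apply]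
    · intro c G; ext i
      simp [WithLp.equiv_symm_apply, PiLp.smul_apply]
  choose col hcol using col_def
  -- orthonormality of the columns of a Parseval frame
  have honcols : ∀ (G : PiLp 2 (fun _ : Fin k => EuclideanSpace ℝ (Fin n))), (∀ x : EuclideanSpace ℝ (Fin n), ∑ i, ⟪G i, x⟫ • G i = x) →
      ∀ j j' : Fin n, ⟪col j G, col j' G⟫ = if j = j' then 1 else 0 := by
    intro G hG j j'
    rw [PiLp.inner_apply]
    rw [← parseval_coords G hG j j']
    apply Finset.sum_congr rfl
    intro i _
    simp [hcol, RCLike.inner_apply]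
    ring
  -- the fixed complement, an orthonormal basis of the orthocomplement of the columns of F
  set S : Submodule ℝ (EuclideanSpace ℝ (Fin k)) :=
    Submodule.span ℝ (Set.range (fun j : Fin n => col j F)) with hS
  have honF : Orthonormal ℝ (fun j : Fin n => col j F) :=
    orthonormal_iff_ite.mpr (honcols F hF)
  have hfrS : Module.finrank ℝ S = n := by
    rw [hS, finrank_span_eq_card honF.linearIndependent, Fintype.card_fin]
  have hfrSo : Module.finrank ℝ (↥Sᗮ) = k - n := by
    have := Submodule.finrank_add_finrank_orthogonal S
    rw [hfrS, finrank_euclideanSpace_fin] at this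
    omega
  set ob : OrthonormalBasis (Fin (k - n)) ℝ ↥Sᗮ :=
    (stdOrthonormalBasis ℝ ↥Sᗮ).reindex (finCongr (by rw [hfrSo])) with hob
  set w : Fin (k - n) → EuclideanSpace ℝ (Fin k) := fun m => (ob m : EuclideanSpace ℝ (Fin k))
    with hw
  -- the augmented family
  set vmap : PiLp 2 (fun _ : Fin k => EuclideanSpace ℝ (Fin n)) → Fin k → EuclideanSpace ℝ (Fin k) := fun G j =>
    if h : (j : ℕ) < n then col ⟨(j : ℕ), h⟩ G
    else w ⟨(j : ℕ) - n, by have := j.isLt; omega⟩ with hvmap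
  -- cross orthogonality
  have hcross : ∀ (j : Fin n) (m : Fin (k - n)), ⟪col j F, w m⟫ = 0 := by
    intro j m
    have hmem : (w m) ∈ Sᗮ := (ob m).2
    exact (Submodule.mem_orthogonal S (w m)).mp hmem _
      (Submodule.subset_span ⟨j, rfl⟩)
  have hww : ∀ m m' : Fin (k - n), ⟪w m, w m'⟫ = if m = m' then 1 else 0 := by
    intro m m'
    have := orthonormal_iff_ite.mp ob.orthonormal m m'
    rwa [Submodule.coe_inner] at this
  -- full orthonormality of `vmap F`
  have honvF : ∀ i j : Fin k, ⟪vmap F i, vmap F j⟫ = if i = j then 1 else 0 := by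
    intro i j
    rw [hvmap]
    by_cases hi : (i : ℕ) < n <;> by_cases hj : (j : ℕ) < n
    · simp only [dif_pos hi, dif_pos hj]
      rw [honcols F hF]
      congr 1
      simp [Fin.ext_iff]
    · simp only [dif_pos hi, dif_neg hj]
      rw [hcross]
      rw [if_neg (fun h : i = j => hj (h ▸ hi))]
    · simp only [dif_neg hi, dif_pos hj]
      rw [real_inner_comm, hcross]
      rw [if_neg (fun h : i = j => hi (h ▸ hj))]
    · simp only [dif_neg hi, dif_neg hj]
      rw [hww]
      by_cases hij : i = j
      · subst hij; simp
      · rw [if_neg hij, if_neg]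
        intro h
        rw [Fin.mk.injEq] at h
        have hik := i.isLt
        have hjk := j.isLt
        exact hij (Fin.ext (by omega))
  -- nonvanishing of Gram-Schmidt at F
  have hgs0 : ∀ j, myGS (vmap F) j ≠ 0 := by
    intro j
    have hfix : myGS (vmap F) j = vmap F j :=
      myGS_prefix (vmap F) (fun i j' hi hj' => honvF i j') j j.isLt
    rw [hfix]
    intro h0
    have := honvF j j
    rw [h0, if_pos rfl, inner_zero_left] at this
    norm_num at this
  -- smoothness of vmap
  have hvsm : ∀ j, ContDiff ℝ (⊤ : ℕ∞) (fun G => vmap G j) := by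
    intro j
    by_cases h : (j : ℕ) < n
    · simp only [hvmap, dif_pos h]
      exact (col ⟨(j : ℕ), h⟩).contDiff
    · simp only [hvmap, dif_neg h]
      exact contDiff_const
  obtain ⟨ε, hε, hsm, hne⟩ := myGS_smooth vmap hvsm F hgs0
  -- the normalized Gram-Schmidt vectors
  set u : PiLp 2 (fun _ : Fin k => EuclideanSpace ℝ (Fin n)) → Fin k → EuclideanSpace ℝ (Fin k) := fun G j =>
    ‖myGS (vmap G) j‖⁻¹ • myGS (vmap G) j with hu
  -- the map φ
  refine ⟨ε, hε, fun G i => (WithLp.equiv 2 ((m : Fin (k - n)) → ℝ)).symm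
    (fun m => u G ⟨n + (m : ℕ), by have := m.isLt; omega⟩ i), ?_, ?_⟩
  · -- smoothness of φ
    rw [contDiffOn_pi]
    intro i
    rw [← (PiLp.continuousLinearEquiv 2 ℝ (fun _ : Fin (k - n) => ℝ)).comp_contDiffOn_iff]
    rw [contDiffOn_pi]
    intro m
    have husm : ContDiffOn ℝ (⊤ : ℕ∞)
        (fun G => u G ⟨n + (m : ℕ), by have := m.isLt; omega⟩) (Metric.ball F ε) := by
      set jm : Fin k := ⟨n + (m : ℕ), by have := m.isLt; omega⟩
      have h1 := hsm jm
      have hne1 : ∀ G ∈ Metric.ball F ε, myGS (vmap G) jm ≠ 0 := fun G hG => hne G hG jm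
      exact ((ContDiffOn.norm ℝ h1 hne1).inv
        (fun G hG => norm_ne_zero_iff.mpr (hne1 G hG))).smul h1
    exact (EuclideanSpace.proj i).contDiff.comp_contDiffOn husm
  · -- the orthonormal basis statement
    intro G hG hGpar
    have hpre : ∀ i j : Fin k, (i : ℕ) < n → (j : ℕ) < n →
        ⟪vmap G i, vmap G j⟫ = if i = j then 1 else 0 := by
      intro i j hi hj
      simp only [hvmap, dif_pos hi, dif_pos hj]
      rw [honcols G hGpar]
      congr 1
      simp [Fin.ext_iff]
    have hfix : ∀ j : Fin k, (j : ℕ) < n → myGS (vmap G) j = vmap G j :=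
      myGS_prefix (vmap G) hpre
    have hnorm1 : ∀ j : Fin k, (j : ℕ) < n → ‖vmap G j‖ = 1 := by
      intro j hj
      have h1 : ⟪vmap G j, vmap G j⟫ = 1 := by rw [hpre j j hj hj, if_pos rfl]
      have h2 : ‖vmap G j‖ ^ 2 = 1 := by rw [← real_inner_self_eq_norm_sq, h1]
      nlinarith [norm_nonneg (vmap G j)]
    have hufix : ∀ j : Fin k, (j : ℕ) < n → u G j = vmap G j := by
      intro j hj
      simp only [hu]
      rw [hfix j hj, hnorm1 j hj]
      simp
    have hudef : ∀ j, u G j = ‖myGS (vmap G) j‖⁻¹ • myGS (vmap G) j := fun j => rfl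
    have hne' : ∀ j, myGS (vmap G) j ≠ 0 := hne G hG
    have huon : ∀ j j' : Fin k, ⟪u G j, u G j'⟫ = if j = j' then 1 else 0 := by
      intro j j'
      by_cases h : j = j'
      · subst h
        rw [if_pos rfl, hudef, real_inner_smul_left, real_inner_smul_right,
          real_inner_self_eq_norm_sq]
        have h0 : ‖myGS (vmap G) j‖ ≠ 0 := norm_ne_zero_iff.mpr (hne' j)
        field_simp
      · rw [if_neg h, hudef, hudef, real_inner_smul_left, real_inner_smul_right,
          myGS_orthogonal _ h]
        ring
    set U : Matrix (Fin k) (Fin k) ℝ := Matrix.of (fun j i => u G j i) with hUdef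
    have hUUT : U * U.transpose = 1 := by
      ext j j'
      rw [Matrix.mul_apply, Matrix.one_apply]
      have hthis := huon j j'
      rw [PiLp.inner_apply] at hthis
      simp only [RCLike.inner_apply, conj_trivial] at hthis
      rw [← hthis]
      apply Finset.sum_congr rfl
      intro i _
      simp [hUdef, Matrix.transpose_apply]
      ring
    have hUTU := mul_eq_one_comm.mp hUUT
    have hsum : ∀ i l : Fin k, ∑ j, u G j i * u G j l = if i = l then 1 else 0 := by
      intro i l
      have h1 : (U.transpose * U) i l = (1 : Matrix (Fin k) (Fin k) ℝ) i l := by rw [hUTU]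
      rw [Matrix.mul_apply, Matrix.one_apply] at h1
      rw [← h1]
      apply Finset.sum_congr rfl
      intro j _
      simp [hUdef, Matrix.transpose_apply]
    -- the candidate orthonormal family
    set bv : Fin k → WithLp 2 (EuclideanSpace ℝ (Fin n) × EuclideanSpace ℝ (Fin (k - n))) :=
      fun i => (WithLp.equiv 2
          (EuclideanSpace ℝ (Fin n) × EuclideanSpace ℝ (Fin (k - n)))).symm
        (G i, (WithLp.equiv 2 ((m : Fin (k - n)) → ℝ)).symm
          (fun m => u G ⟨n + (m : ℕ), by have := m.isLt; omega⟩ i)) with hbv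
    have hGu : ∀ (j' : Fin n) (i : Fin k),
        G i j' = u G ⟨(j' : ℕ), lt_of_lt_of_le j'.isLt hkn⟩ i := by
      intro j' i
      have hlt : (((⟨(j' : ℕ), lt_of_lt_of_le j'.isLt hkn⟩ : Fin k)) : ℕ) < n := j'.isLt
      rw [hufix _ hlt]
      simp only [hvmap, dif_pos hlt]
      rw [hcol]
    have hsplit : ∀ f : Fin k → ℝ,
        ∑ j, f j = (∑ j' : Fin n, f ⟨(j' : ℕ), lt_of_lt_of_le j'.isLt hkn⟩) +
          ∑ m : Fin (k - n), f ⟨n + (m : ℕ), by have := m.isLt; omega⟩ := by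
      intro f
      set ι : Fin n ⊕ Fin (k - n) ≃ Fin k :=
        finSumFinEquiv.trans (finCongr (Nat.add_sub_cancel' hkn)) with hι
      rw [← Equiv.sum_comp ι f, Fintype.sum_sum_type]
      congr 1
    have honb : Orthonormal ℝ bv := by
      rw [orthonormal_iff_ite]
      intro i l
      have hinner : ⟪bv i, bv l⟫ = ⟪G i, G l⟫ +
          ⟪(WithLp.equiv 2 ((m : Fin (k - n)) → ℝ)).symm
            (fun m => u G ⟨n + (m : ℕ), by have := m.isLt; omega⟩ i),
          (WithLp.equiv 2 ((m : Fin (k - n)) → ℝ)).symm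
            (fun m => u G ⟨n + (m : ℕ), by have := m.isLt; omega⟩ l)⟫ := by
        simp only [hbv, WithLp.prod_inner_apply, WithLp.equiv_symm_apply, WithLp.ofLp_toLp]
      rw [hinner]
      have hE : ⟪G i, G l⟫ = ∑ j' : Fin n,
          u G ⟨(j' : ℕ), lt_of_lt_of_le j'.isLt hkn⟩ i *
          u G ⟨(j' : ℕ), lt_of_lt_of_le j'.isLt hkn⟩ l := by
        rw [PiLp.inner_apply]
        apply Finset.sum_congr rfl
        intro j' _
        rw [← hGu, ← hGu]
        simp [RCLike.inner_apply]
        ring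
      have hE' : ⟪(WithLp.equiv 2 ((m : Fin (k - n)) → ℝ)).symm
            (fun m => u G ⟨n + (m : ℕ), by have := m.isLt; omega⟩ i),
          (WithLp.equiv 2 ((m : Fin (k - n)) → ℝ)).symm
            (fun m => u G ⟨n + (m : ℕ), by have := m.isLt; omega⟩ l)⟫ =
          ∑ m : Fin (k - n), u G ⟨n + (m : ℕ), by have := m.isLt; omega⟩ i *
            u G ⟨n + (m : ℕ), by have := m.isLt; omega⟩ l := by
        rw [PiLp.inner_apply]
        apply Finset.sum_congr rfl
        intro m _
        simp [WithLp.equiv_symm_apply, RCLike.inner_apply]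
        ring
      rw [hE, hE', ← hsplit (fun j => u G j i * u G j l)]
      exact hsum i l
    -- dimension count
    haveI : FiniteDimensional ℝ
        (WithLp 2 (EuclideanSpace ℝ (Fin n) × EuclideanSpace ℝ (Fin (k - n)))) :=
      LinearEquiv.finiteDimensional
        (WithLp.linearEquiv 2 ℝ
          (EuclideanSpace ℝ (Fin n) × EuclideanSpace ℝ (Fin (k - n)))).symm
    have hfr : Module.finrank ℝ
        (WithLp 2 (EuclideanSpace ℝ (Fin n) × EuclideanSpace ℝ (Fin (k - n)))) = k := by
      rw [(WithLp.linearEquiv 2 ℝ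
        (EuclideanSpace ℝ (Fin n) × EuclideanSpace ℝ (Fin (k - n)))).finrank_eq]
      rw [Module.finrank_prod, finrank_euclideanSpace_fin, finrank_euclideanSpace_fin]
      omega
    have hspan : ⊤ ≤ Submodule.span ℝ (Set.range bv) := by
      have htop : Submodule.span ℝ (Set.range bv) = ⊤ :=
        Submodule.eq_top_of_finrank_eq
          (by rw [finrank_span_eq_card honb.linearIndependent, Fintype.card_fin, hfr])
      rw [htop]
    refine ⟨OrthonormalBasis.mk honb hspan, fun i => ?_⟩
    rw [OrthonormalBasis.coe_mk]
end
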